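/- Let 𝔰 be a finite-dimensional semisimple complex Lie algebra and V a finite-dimensional 𝔰-module whose zero weight space V_0 (with respect to a Cartan subalgebra) is zero. Then for every n ≥ 1 the map D^n : S^n(𝔰) ⊗ V → S^{n-1}(𝔰) ⊗ V given by D^n(X_1⋯X_n ⊗ v) = Σ_i X_1⋯X̂_i⋯X_n ⊗ X_i·v is surjective. -/

import Mathlib

/-! If a linear form `φ` on `Sᵐ(𝔰) ⊗ V` kills the image of `D`, then applying `D` to `Xᵐ⁺¹ ⊗ v`
gives `φ (Xᵐ ⊗ X • v) = 0`. Since the zero weight of the Cartan subalgebra does not occur in `V`, a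
generic element `X` of `𝔰` acts invertibly on `V`, so the polynomial function `X ↦ φ (Xᵐ ⊗ w)`
vanishes off the hypersurface `det (X|V) = 0`, hence everywhere. In characteristic zero the powers
`Xᵐ` span `Sᵐ(𝔰)`, so `φ = 0`. -/

open TensorProduct

noncomputable def symRel (n : ℕ) (M : Type) [AddCommGroup M] [Module ℂ M] :
    Submodule ℂ (⨂[ℂ]^n M) :=
  Submodule.span ℂ {x | ∃ (f : Fin n → M) (i j : Fin n),
    x = PiTensorProduct.tprod ℂ f - PiTensorProduct.tprod ℂ (f ∘ Equiv.swap i j)}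

abbrev SymPow (n : ℕ) (M : Type) [AddCommGroup M] [Module ℂ M] :=
  (⨂[ℂ]^n M) ⧸ symRel n M

noncomputable def symProd (n : ℕ) (M : Type) [AddCommGroup M] [Module ℂ M] (f : Fin n → M) :
    SymPow n M := (symRel n M).mkQ (PiTensorProduct.tprod ℂ f)

/-- The weight space of a Lie algebra module (simultaneous eigenspace). -/
noncomputable def wtSpace (𝔥 V : Type) [LieRing 𝔥] [LieAlgebra ℂ 𝔥] [AddCommGroup V]
    [Module ℂ V] [LieRingModule 𝔥 V] [LieModule ℂ 𝔥 V] (μ : Module.Dual ℂ 𝔥) :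
    Submodule ℂ V :=
  ⨅ H : 𝔥, Module.End.eigenspace (LieModule.toEnd ℂ 𝔥 V H) (μ H)

open MvPolynomial

section SymPow

variable {M : Type} [AddCommGroup M] [Module ℂ M] {n : ℕ}

lemma symProd_comp_swap (f : Fin n → M) (i j : Fin n) :
    symProd n M (f ∘ Equiv.swap i j) = symProd n M f :=
  ((Submodule.Quotient.eq (symRel n M)).mpr (Submodule.subset_span ⟨f, i, j, rfl⟩)).symm

lemma symProd_comp_perm (σ : Equiv.Perm (Fin n)) (f : Fin n → M) :
    symProd n M (f ∘ σ) = symProd n M f := by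
  induction σ using Equiv.Perm.swap_induction_on generalizing f with
  | one => rfl
  | swap_mul π i j _ ih =>
    change symProd n M ((f ∘ Equiv.swap i j) ∘ π) = _
    rw [ih, symProd_comp_swap]

lemma symProd_sum_smul {ι : Type} [Fintype ι] [DecidableEq ι] (b : ι → M) (c : Fin n → ι → ℂ) :
    symProd n M (fun j => ∑ i, c j i • b i) =
      ∑ k : Fin n → ι, (∏ j, c j (k j)) • symProd n M (b ∘ k) := by
  simp only [symProd, MultilinearMap.map_sum, MultilinearMap.map_smul_univ, map_sum, map_smul]
  rfl

lemma exists_perm_of_sum_single_eq {ι : Type} [DecidableEq ι] {k k' : Fin n → ι}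
    (h : ∑ j, Finsupp.single (k j) 1 = ∑ j, Finsupp.single (k' j) (1 : ℕ)) :
    ∃ σ : Equiv.Perm (Fin n), k = k' ∘ σ := by
  have hcard (i : ι) : Fintype.card {j // k j = i} = Fintype.card {j // k' j = i} := by
    have := DFunLike.congr_fun h i
    simp only [Finsupp.finsetSum_apply, Finsupp.single_apply] at this
    simpa only [Fintype.card_subtype, Finset.card_filter] using this
  exact ⟨Equiv.ofFiberEquiv fun i => Fintype.equivOfCardEq (hcard i),
    funext fun j => (Equiv.ofFiberEquiv_map _ j).symm⟩

end SymPow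

section Polarization

variable {M : Type} [AddCommGroup M] [Module ℂ M] {n : ℕ} {ι : Type} [Fintype ι] [DecidableEq ι]

/-- The polynomial function `x ↦ L (xⁿ)` in the coordinates of the basis `b`. -/
noncomputable def powPoly (b : Module.Basis ι ℂ M) (L : SymPow n M →ₗ[ℂ] ℂ) : MvPolynomial ι ℂ :=
  ∑ k : Fin n → ι, L (symProd n M (b ∘ k)) • ∏ j, X (k j)

lemma eval_powPoly (b : Module.Basis ι ℂ M) (L : SymPow n M →ₗ[ℂ] ℂ) (x : M) :
    eval (b.repr x) (powPoly b L) = L (symProd n M fun _ => x) := by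
  conv_rhs => rw [← b.sum_repr x, symProd_sum_smul b fun _ => b.repr x]
  simp [powPoly, smul_eval, mul_comm]

lemma coeff_powPoly (b : Module.Basis ι ℂ M) (L : SymPow n M →ₗ[ℂ] ℂ) (μ : ι →₀ ℕ) :
    coeff μ (powPoly b L) =
      ∑ k : Fin n → ι with ∑ j, Finsupp.single (k j) 1 = μ, L (symProd n M (b ∘ k)) := by
  simp only [powPoly, coeff_sum, coeff_smul, X, ← monomial_sum_one, coeff_monomial, smul_eq_mul,
    mul_ite, mul_one, mul_zero, Finset.sum_filter]

lemma eq_zero_of_powPoly_eq_zero (b : Module.Basis ι ℂ M) {L : SymPow n M →ₗ[ℂ] ℂ}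
    (hL : powPoly b L = 0) : L = 0 := by
  have hbasis (k : Fin n → ι) : L (symProd n M (b ∘ k)) = 0 := by
    set μ := ∑ j, Finsupp.single (k j) (1 : ℕ)
    set fiber := Finset.univ.filter fun k' : Fin n → ι => ∑ j, Finsupp.single (k' j) 1 = μ
    have hcoeff : coeff μ (powPoly b L) = fiber.card • L (symProd n M (b ∘ k)) := by
      rw [coeff_powPoly, ← Finset.sum_const]
      refine Finset.sum_congr rfl fun k' hk' => ?_
      obtain ⟨σ, rfl⟩ := exists_perm_of_sum_single_eq (Finset.mem_filter.mp hk').2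
      exact congrArg L (symProd_comp_perm σ (b ∘ k))
    have hk : k ∈ fiber := Finset.mem_filter.mpr ⟨Finset.mem_univ k, rfl⟩
    rw [hL, coeff_zero, eq_comm, smul_eq_zero] at hcoeff
    exact hcoeff.resolve_left (Finset.card_ne_zero_of_mem hk)
  refine Submodule.linearMap_qext _ ((Basis.piTensorProduct fun _ => b).ext fun k => ?_)
  simpa [Basis.piTensorProduct_apply, symProd, Function.comp_def] using hbasis k

lemma eq_zero_of_forall_pow_of_eval_ne_zero (b : Module.Basis ι ℂ M) {L : SymPow n M →ₗ[ℂ] ℂ}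
    {P : MvPolynomial ι ℂ} (hP : P ≠ 0)
    (h : ∀ x, eval (b.repr x) P ≠ 0 → L (symProd n M fun _ => x) = 0) : L = 0 := by
  refine eq_zero_of_powPoly_eq_zero b ((mul_eq_zero.mp ?_).resolve_right hP)
  refine MvPolynomial.funext fun c => ?_
  obtain ⟨x, rfl⟩ : ∃ x, ⇑(b.repr x) = c := ⟨b.equivFun.symm c, b.equivFun.apply_symm_apply c⟩
  by_cases hx : eval (b.repr x) P = 0
  · simp [hx]
  · simp [eval_powPoly, h x hx]

end Polarization

lemma LinearMap.isUnit_iff_charpoly_coeff_zero_ne_zero {K M : Type*} [Field K] [AddCommGroup M]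
    [Module K M] [FiniteDimensional K M] (f : Module.End K M) :
    IsUnit f ↔ f.charpoly.coeff 0 ≠ 0 := by
  simp [LinearMap.isUnit_iff_isUnit_det, LinearMap.det_eq_sign_charpoly_coeff]

namespace LieModule

variable {K L V : Type*} [Field K] [LieRing L] [LieAlgebra K L] [LieRing.IsNilpotent L]
  [AddCommGroup V] [Module K V] [FiniteDimensional K V] [LieRingModule L V] [LieModule K L V]

lemma genWeightSpace_le_range_toEnd {χ : L → K} {x : L} (hx : χ x ≠ 0) :
    (genWeightSpace V χ).toSubmodule ≤ LinearMap.range (toEnd K L V x) := by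
  intro v hv
  -- on `genWeightSpace V χ`, `x` acts as the unit `χ x` plus a nilpotent
  have hunit : IsUnit (toEnd K L (genWeightSpace V χ) x) := by
    simpa using (isNilpotent_toEnd_sub_algebraMap V χ x).isUnit_add_left_of_commute
      ((isUnit_iff_ne_zero.mpr hx).map (algebraMap K _)) (Algebra.commute_algebraMap_right _ _)
  obtain ⟨u, hu⟩ := ((Module.End.isUnit_iff _).mp hunit).2 ⟨v, hv⟩
  exact ⟨u, congrArg Subtype.val hu⟩

variable [Infinite K] [LinearWeights K L V]

lemma exists_forall_weight_apply_ne_zero (h : ∀ χ : Weight K L V, χ.IsNonZero) :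
    ∃ x : L, ∀ χ : Weight K L V, χ x ≠ 0 := by
  by_contra! hcover
  obtain ⟨χ, hχ⟩ := Subspace.exists_eq_top_of_iUnion_eq_univ
    (p := fun χ : Weight K L V => LinearMap.ker (χ : L →ₗ[K] K))
    (Set.eq_univ_of_forall fun x => Set.mem_iUnion.mpr (hcover x))
  exact (Weight.coe_toLinear_ne_zero_iff.mpr (h χ)) (LinearMap.ker_eq_top.mp hχ)

lemma exists_isUnit_toEnd [IsTriangularizable K L V] (h : ∀ χ : Weight K L V, χ.IsNonZero) :
    ∃ x : L, IsUnit (toEnd K L V x) := by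
  obtain ⟨x, hx⟩ := exists_forall_weight_apply_ne_zero h
  have hsurj : Function.Surjective (toEnd K L V x) := by
    have hspan := congrArg LieSubmodule.toSubmodule (iSup_genWeightSpace_eq_top' K L V)
    rw [LieSubmodule.iSup_toSubmodule, LieSubmodule.top_toSubmodule] at hspan
    rw [← LinearMap.range_eq_top, eq_top_iff, ← hspan]
    exact iSup_le fun χ => genWeightSpace_le_range_toEnd (hx χ)
  exact ⟨x, (Module.End.isUnit_iff _).mpr ⟨LinearMap.injective_iff_surjective.mpr hsurj, hsurj⟩⟩

end LieModule

lemma isNonZero_of_wtSpace_zero_eq_bot {H V : Type} [LieRing H] [LieAlgebra ℂ H]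
    [LieRing.IsNilpotent H] [AddCommGroup V] [Module ℂ V] [FiniteDimensional ℂ V]
    [LieRingModule H V] [LieModule ℂ H V] (hV0 : wtSpace H V 0 = ⊥) (χ : LieModule.Weight ℂ H V) :
    χ.IsNonZero := by
  intro hχ
  obtain ⟨v, hv, hχv⟩ := LieModule.exists_forall_lie_eq_smul ℂ H V χ
  refine hv ((Submodule.mem_bot ℂ).mp (hV0 ▸ ?_))
  simp [wtSpace, hχv, hχ.eq]

theorem statement1_general (𝔰 : Type) [LieRing 𝔰] [LieAlgebra ℂ 𝔰] [FiniteDimensional ℂ 𝔰]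
    (H : LieSubalgebra ℂ 𝔰) [H.IsCartanSubalgebra]
    (V : Type) [AddCommGroup V] [Module ℂ V] [LieRingModule 𝔰 V] [LieModule ℂ 𝔰 V]
    [FiniteDimensional ℂ V]
    (hV0 : wtSpace H V (0 : Module.Dual ℂ H) = ⊥)
    (m : ℕ)
    (D : (SymPow (m + 1) 𝔰 ⊗[ℂ] V) →ₗ[ℂ] SymPow m 𝔰 ⊗[ℂ] V)
    (hD : ∀ (f : Fin (m + 1) → 𝔰) (v : V),
      D (symProd (m + 1) 𝔰 f ⊗ₜ[ℂ] v) =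
        ∑ i : Fin (m + 1), symProd m 𝔰 (f ∘ i.succAbove) ⊗ₜ[ℂ] ⁅f i, v⁆) :
    Function.Surjective D := by
  obtain ⟨X₀, hX₀⟩ :=
    LieModule.exists_isUnit_toEnd (L := H) (isNonZero_of_wtSpace_zero_eq_bot hV0)
  set b := Module.finBasis ℂ 𝔰
  set P := (LinearMap.polyCharpoly (LieModule.toEnd ℂ 𝔰 V : 𝔰 →ₗ[ℂ] Module.End ℂ V) b).coeff 0
  have hP (X : 𝔰) : eval (b.repr X) P ≠ 0 ↔ IsUnit (LieModule.toEnd ℂ 𝔰 V X) := by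
    rw [LinearMap.polyCharpoly_coeff_eval, LinearMap.isUnit_iff_charpoly_coeff_zero_ne_zero]
    rfl
  have hP0 : P ≠ 0 := fun h => by simpa [h] using (hP X₀).mpr hX₀
  rw [← LinearMap.range_eq_top, ← Submodule.dualAnnihilator_eq_bot_iff, Submodule.eq_bot_iff]
  intro φ hφ
  rw [Submodule.mem_dualAnnihilator] at hφ
  have hpow (X : 𝔰) (v : V) : φ (symProd m 𝔰 (fun _ => X) ⊗ₜ ⁅X, v⁆) = 0 := by
    have h := hφ _ (LinearMap.mem_range_self D (symProd (m + 1) 𝔰 (fun _ => X) ⊗ₜ v))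
    simpa [hD, Function.comp_def, Nat.cast_add_one_ne_zero] using h
  refine TensorProduct.ext' fun s w => ?_
  have hw : φ ∘ₗ (TensorProduct.mk ℂ _ V).flip w = 0 := by
    refine eq_zero_of_forall_pow_of_eval_ne_zero b hP0 fun X hX => ?_
    obtain ⟨v, rfl⟩ := ((Module.End.isUnit_iff _).mp ((hP X).mp hX)).2 w
    exact hpow X v
  exact LinearMap.congr_fun hw s

theorem statement1 (𝔰 : Type) [LieRing 𝔰] [LieAlgebra ℂ 𝔰] [FiniteDimensional ℂ 𝔰]
    [LieAlgebra.IsSemisimple ℂ 𝔰]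
    (H : LieSubalgebra ℂ 𝔰) [H.IsCartanSubalgebra]
    (V : Type) [AddCommGroup V] [Module ℂ V] [LieRingModule 𝔰 V] [LieModule ℂ 𝔰 V]
    [FiniteDimensional ℂ V]
    (hV0 : wtSpace H V (0 : Module.Dual ℂ H) = ⊥)
    (m : ℕ)
    (D : (SymPow (m + 1) 𝔰 ⊗[ℂ] V) →ₗ[ℂ] SymPow m 𝔰 ⊗[ℂ] V)
    (hD : ∀ (f : Fin (m + 1) → 𝔰) (v : V),
      D (symProd (m + 1) 𝔰 f ⊗ₜ[ℂ] v) =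
        ∑ i : Fin (m + 1), symProd m 𝔰 (f ∘ i.succAbove) ⊗ₜ[ℂ] ⁅f i, v⁆) :
    Function.Surjective D :=
  statement1_general 𝔰 H V hV0 m D hD
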